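/- Let C ⊆ {0,1}^n be a binary code such that the set of Hamming distances between distinct codewords has exactly s values, all positive. Then |C| ≤ C(n+s, s) (the binomial coefficient 'n+s choose s'). -/

import Mathlib

/-!
Polynomial method (Delsarte; Babai–Snevily–Wilson). For `u ∈ C` the function
`F_u x = ∏_{d ∈ D} (d - hd u x)` on the cube is nonzero at `u` (all `d > 0`) and vanishes at every
other codeword (their distances to `u` lie in `D`), so the `F_u` are linearly independent.
Since `hd u x` is an affine function of the coordinates of `x`, each `F_u` is a polynomial of
degree `≤ s`, and on `{0,1}^n` it may be taken multilinear because `x_j ^ 2 = x_j`. The multilinear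
functions of degree `≤ s` are spanned by the `∑_{i ≤ s} (n choose i) ≤ (n + s choose s)`
monomials `x_S`, `|S| ≤ s`.
-/

/-- Hamming distance between Boolean vectors. -/
def hd {n : ℕ} (u v : Fin n → Bool) : ℕ :=
  (Finset.univ.filter (fun j => u j ≠ v j)).card

open Finset Module

theorem Module.card_le_finrank_of_eval_eq_zero {X K : Type*} [Field K]
    (W : Submodule K (X → K)) [FiniteDimensional K W] (C : Finset X) (f : X → X → K)
    (hW : ∀ u ∈ C, f u ∈ W) (hdiag : ∀ u ∈ C, f u u ≠ 0)
    (hoff : ∀ u ∈ C, ∀ v ∈ C, u ≠ v → f u v = 0) :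
    #C ≤ finrank K W := by
  let g : C → X → K := fun u => (f u u)⁻¹ • f u
  have hg : LinearIndependent K g := by
    refine .of_pairwise_dual_eq_zero_one g (fun v => LinearMap.proj (v : X)) ?_ ?_
    · intro v u hvu
      simp [g, hoff u u.2 v v.2 (Subtype.coe_injective.ne hvu.symm)]
    · intro u
      simp [g, hdiag u u.2]
  have hspan : Submodule.span K (Set.range g) ≤ W := by
    rw [Submodule.span_le]
    rintro _ ⟨u, rfl⟩
    exact W.smul_mem _ (hW u u.2)
  simpa [finrank_span_eq_card hg] using Submodule.finrank_mono hspan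

theorem Nat.sum_range_choose_le_add_choose (n s : ℕ) :
    ∑ i ∈ range (s + 1), n.choose i ≤ (n + s).choose s := by
  rw [Nat.add_choose_eq, Nat.sum_antidiagonal_eq_sum_range_succ_mk]
  gcongr with i
  exact Nat.le_mul_of_pos_right _ (Nat.choose_pos (Nat.sub_le _ _))

section BoolCube

variable {K ι : Type*} [Field K]

/-- The monomial `x_S = ∏_{i ∈ S} x_i` on the Boolean cube, with `true` read as `1`. -/
noncomputable def boolMonomial (S : Finset ι) : (ι → Bool) → K :=
  {x | ∀ i ∈ S, x i}.indicator 1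

variable (K ι) in
def boolDegreeLE (k : ℕ) : Submodule K ((ι → Bool) → K) :=
  Submodule.span K (boolMonomial '' {S | #S ≤ k})

theorem boolMonomial_union [DecidableEq ι] (S T : Finset ι) :
    (boolMonomial (S ∪ T) : (ι → Bool) → K) = boolMonomial S * boolMonomial T := by
  rw [boolMonomial, boolMonomial, boolMonomial, ← Set.inter_indicator_one]
  congr 1
  ext x
  simp [or_imp, forall_and]

theorem boolMonomial_singleton (i : ι) (x : ι → Bool) :
    (boolMonomial {i} x : K) = if x i then 1 else 0 := by
  by_cases h : x i <;> simp [boolMonomial, h]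

theorem boolMonomial_mem_boolDegreeLE {S : Finset ι} {k : ℕ} (hS : #S ≤ k) :
    (boolMonomial S : (ι → Bool) → K) ∈ boolDegreeLE K ι k :=
  Submodule.subset_span ⟨S, hS, rfl⟩

theorem one_mem_boolDegreeLE (k : ℕ) : (1 : (ι → Bool) → K) ∈ boolDegreeLE K ι k := by
  have h : (boolMonomial ∅ : (ι → Bool) → K) = 1 := by simp [boolMonomial]
  exact h ▸ boolMonomial_mem_boolDegreeLE (by simp)

theorem mul_mem_boolDegreeLE {a b : ℕ} {f g : (ι → Bool) → K}
    (hf : f ∈ boolDegreeLE K ι a) (hg : g ∈ boolDegreeLE K ι b) :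
    f * g ∈ boolDegreeLE K ι (a + b) := by
  classical
  have h := Submodule.mul_mem_mul hf hg
  rw [boolDegreeLE, boolDegreeLE, Submodule.span_mul_span] at h
  refine Submodule.span_le.2 ?_ h
  rintro _ ⟨_, ⟨S, hS, rfl⟩, _, ⟨T, hT, rfl⟩, rfl⟩
  simp only [← boolMonomial_union]
  exact boolMonomial_mem_boolDegreeLE ((card_union_le S T).trans (add_le_add hS hT))

theorem prod_mem_boolDegreeLE {α : Type*} (s : Finset α) (f : α → (ι → Bool) → K)
    (k : α → ℕ) (hf : ∀ a ∈ s, f a ∈ boolDegreeLE K ι (k a)) :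
    ∏ a ∈ s, f a ∈ boolDegreeLE K ι (∑ a ∈ s, k a) := by
  classical
  induction s using Finset.induction with
  | empty => simpa using one_mem_boolDegreeLE 0
  | insert a s ha ih =>
    rw [prod_insert ha, sum_insert ha]
    exact mul_mem_boolDegreeLE (hf a (mem_insert_self a s))
      (ih fun b hb => hf b (mem_insert_of_mem hb))

theorem finrank_boolDegreeLE_le [Fintype ι] (k : ℕ) :
    finrank K (boolDegreeLE K ι k) ≤ ∑ i ∈ range (k + 1), (Fintype.card ι).choose i := by
  classical
  let T : Finset (Finset ι) := (range (k + 1)).biUnion fun i => powersetCard i univ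
  have hT : boolDegreeLE K ι k = Submodule.span K ↑(T.image (boolMonomial (K := K))) := by
    rw [boolDegreeLE, coe_image]
    congr 2
    ext S
    simp [T]
  calc finrank K (boolDegreeLE K ι k) ≤ #(T.image (boolMonomial (K := K))) :=
        hT ▸ finrank_span_finset_le_card _
    _ ≤ #T := card_image_le
    _ ≤ ∑ i ∈ range (k + 1), #(powersetCard i (univ : Finset ι)) := card_biUnion_le
    _ = ∑ i ∈ range (k + 1), (Fintype.card ι).choose i := by simp

end BoolCube

theorem hd_self {n : ℕ} (u : Fin n → Bool) : hd u u = 0 := by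
  simp [hd]

theorem hd_mem_boolDegreeLE {K : Type*} [Field K] {n : ℕ} (u : Fin n → Bool) :
    (fun x => (hd u x : K)) ∈ boolDegreeLE K (Fin n) 1 := by
  have hsum : (fun x => (hd u x : K)) =
      ∑ j, if u j then 1 - boolMonomial {j} else boolMonomial {j} := by
    funext x
    simp only [hd, card_filter, Nat.cast_sum, Finset.sum_apply]
    refine sum_congr rfl fun j _ => ?_
    cases u j <;> cases hx : x j <;> simp [boolMonomial_singleton, hx]
  rw [hsum]
  refine Submodule.sum_mem _ fun j _ => ?_
  have hj := boolMonomial_mem_boolDegreeLE (K := K) (card_singleton j).le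
  split
  · exact Submodule.sub_mem _ (one_mem_boolDegreeLE 1) hj
  · exact hj

theorem stmt5 {n s : ℕ} (C : Finset (Fin n → Bool)) (D : Finset ℕ)
    (hcard : D.card = s) (hpos : ∀ d ∈ D, 0 < d)
    (hset : {m | ∃ u ∈ C, ∃ v ∈ C, u ≠ v ∧ hd u v = m} = ↑D) :
    C.card ≤ (n + s).choose s := by
  have hdist : ∀ u ∈ C, ∀ v ∈ C, u ≠ v → hd u v ∈ D := fun u hu v hv huv => by
    have h : hd u v ∈ (D : Set ℕ) := hset ▸ ⟨u, hu, v, hv, huv, rfl⟩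
    exact_mod_cast h
  let F : (Fin n → Bool) → (Fin n → Bool) → ℝ := fun u x => ∏ d ∈ D, ((d : ℝ) - hd u x)
  have hF : ∀ u, F u ∈ boolDegreeLE ℝ (Fin n) s := fun u => by
    have hFu : F u = ∏ d ∈ D, ((d : ℝ) • 1 - fun x => (hd u x : ℝ)) := by
      funext x
      simp [F, prod_apply]
    have h := prod_mem_boolDegreeLE D _ (fun _ => 1) fun d _ =>
      Submodule.sub_mem _ (Submodule.smul_mem _ (d : ℝ) (one_mem_boolDegreeLE 1))
        (hd_mem_boolDegreeLE u)
    simpa [hFu, hcard] using h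
  calc C.card ≤ finrank ℝ (boolDegreeLE ℝ (Fin n) s) :=
        card_le_finrank_of_eval_eq_zero _ C F (fun u _ => hF u)
          (fun u _ => prod_ne_zero_iff.2 fun d hdD => by simpa [hd_self] using (hpos d hdD).ne')
          (fun u hu v hv huv => prod_eq_zero (hdist u hu v hv huv) (sub_self _))
    _ ≤ ∑ i ∈ range (s + 1), n.choose i := by
        simpa using finrank_boolDegreeLE_le (K := ℝ) (ι := Fin n) s
    _ ≤ (n + s).choose s := Nat.sum_range_choose_le_add_choose n s
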